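/- For every simple graph G and positive integer t, χ(S[G,t]) ≤ χ(G) + 1. Moreover, for t ≥ 3 there is a proper (χ(G)+1)-coloring of S[G,t] in which the extra color is used only on vertices contracted at steps s ≥ 3. -/

import Mathlib

/-! Colour `G` properly with the group `Fin (m + 1)`. A word that ends a linking edge produced at
a step `≥ 3` ends in at least two equal letters; give it the extra colour. Any other word gets
the sum of the colours of its last two letters. The two ends of a linking edge either are both
of the first kind, or differ by swapping their last two letters, so the colouring passes to the
quotient `S[G,t]`. The remaining edges of `S[G,t]` join words that differ only in their last
letter, where the colours differ because the colouring of `G` is proper. -/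

variable {V : Type*}

/-- Adjacency of the generalized Sierpiński graph `S(G,t)` on words of length `t`:
`u` and `v` are adjacent iff there is an index `i` with `u j = v j` for `j < i`,
`u i` adjacent to `v i` in `G`, and `u j = v i`, `v j = u i` for `j > i`. -/
def sierAdj (G : SimpleGraph V) (t : ℕ) (u v : Fin t → V) : Prop :=
  ∃ i : Fin t, (∀ j, j < i → u j = v j) ∧ G.Adj (u i) (v i) ∧
    ∀ j, i < j → u j = v i ∧ v j = u i

/-- The generalized Sierpiński graph `S(G,t)`. -/
def sier (G : SimpleGraph V) (t : ℕ) : SimpleGraph (Fin t → V) where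
  Adj := sierAdj G t
  symm := ⟨by
    rintro u v ⟨i, h1, h2, h3⟩
    exact ⟨i, fun j hj => (h1 j hj).symm, h2.symm,
      fun j hj => ⟨(h3 j hj).2, (h3 j hj).1⟩⟩⟩
  loopless := ⟨by
    rintro u ⟨i, h1, h2, h3⟩
    exact G.loopless.irrefl _ h2⟩

/-- `linkingAt G t p u v` : `uv` is a linking edge of `S(G,t)` appearing at
(0-indexed) position `p < t - 1`; in the paper's terminology this linking edge is
produced at step `t - p`, and its contraction is a vertex contracted at step `t - p`. -/
def linkingAt (G : SimpleGraph V) (t p : ℕ) (u v : Fin t → V) : Prop :=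
  ∃ i : Fin t, i.val = p ∧ i.val + 1 < t ∧ (∀ j, j < i → u j = v j) ∧
    G.Adj (u i) (v i) ∧ ∀ j, i < j → u j = v i ∧ v j = u i

/-- `uv` is a linking edge of `S(G,t)` (an edge appearing at some step `≥ 2`). -/
def linking (G : SimpleGraph V) (t : ℕ) (u v : Fin t → V) : Prop :=
  ∃ p, linkingAt G t p u v

/-- The equivalence relation on words generated by identifying the two endpoints
of each linking edge. -/
def gasketSetoid (G : SimpleGraph V) (t : ℕ) : Setoid (Fin t → V) :=
  Relation.EqvGen.setoid (linking G t)

/-- The generalized Sierpiński gasket graph `S[G,t]`, obtained from `S(G,t)` by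
contracting all linking edges. -/
def gasket (G : SimpleGraph V) (t : ℕ) :
    SimpleGraph (Quotient (gasketSetoid G t)) where
  Adj x y := x ≠ y ∧ ∃ u v, Quotient.mk (gasketSetoid G t) u = x ∧
    Quotient.mk (gasketSetoid G t) v = y ∧ sierAdj G t u v
  symm := ⟨by
    rintro x y ⟨hxy, u, v, hu, hv, h⟩
    exact ⟨hxy.symm, v, u, hv, hu, (sier G t).symm.symm _ _ h⟩⟩
  loopless := ⟨fun _ h => h.1 rfl⟩

/-- The expanded word `i j j ... j`; for `ij ∈ E(G)` its class in `S[G,t]` is the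
contracted vertex `{i,j}_t`. -/
def topWord (t : ℕ) (i j : V) : Fin t → V := fun k => if k.val = 0 then i else j

/-- `x` is a vertex of `S[G,t]` contracted at step `s` (the contraction of a linking
edge at position `t - s`). -/
def contractedVtxAtStep (G : SimpleGraph V) (t s : ℕ)
    (x : Quotient (gasketSetoid G t)) : Prop :=
  ∃ u v, linkingAt G t (t - s) u v ∧ Quotient.mk (gasketSetoid G t) u = x

variable {G : SimpleGraph V} {t p : ℕ} {u v : Fin t → V}

theorem linkingAt.symm (h : linkingAt G t p u v) : linkingAt G t p v u := by
  obtain ⟨i, hip, hit, hpre, hadj, hsuf⟩ := h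
  exact ⟨i, hip, hit, fun j hj => (hpre j hj).symm, hadj.symm, fun j hj => (hsuf j hj).symm⟩

theorem linkingAt.apply_eq_apply (h : linkingAt G t p u v) {j k : Fin t} (hj : p < j)
    (hk : p < k) : u j = u k := by
  obtain ⟨i, rfl, -, -, -, hsuf⟩ := h
  exact (hsuf j hj).1.trans (hsuf k hk).1.symm

theorem linkingAt.adj_apply (h : linkingAt G t p u v) {j k : Fin t} (hj : p = j) (hk : p < k) :
    G.Adj (u j) (u k) := by
  obtain ⟨i, rfl, -, -, hadj, hsuf⟩ := h
  rwa [(hsuf k hk).1, ← Fin.ext hj]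

def IsDeepLinkEnd (G : SimpleGraph V) (t : ℕ) (u : Fin t → V) : Prop :=
  ∃ p v, p + 3 ≤ t ∧ linkingAt G t p u v

theorem IsDeepLinkEnd.apply_eq_apply (h : IsDeepLinkEnd G t u) {j k : Fin t} (hj : t ≤ j + 2)
    (hk : t ≤ k + 2) : u j = u k := by
  obtain ⟨p, v, hp, hlink⟩ := h
  exact hlink.apply_eq_apply (by omega) (by omega)

theorem linkingAt.not_isDeepLinkEnd (h : linkingAt G t p u v) (hp : t ≤ p + 2) :
    ¬ IsDeepLinkEnd G t u := by
  intro hdeep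
  have hpt : p + 1 < t := by obtain ⟨i, rfl, hit, -⟩ := h; exact hit
  exact (h.adj_apply (j := ⟨p, by omega⟩) rfl (k := ⟨t - 1, by omega⟩) (by simp; omega)).ne
    (hdeep.apply_eq_apply (by simp; omega) (by simp; omega))

theorem IsDeepLinkEnd.exists_contractedVtxAtStep (h : IsDeepLinkEnd G t u) :
    ∃ s, 3 ≤ s ∧ s ≤ t ∧ contractedVtxAtStep G t s ⟦u⟧ := by
  obtain ⟨p, v, hp, hlink⟩ := h
  exact ⟨t - p, by omega, by omega, u, v, by rwa [Nat.sub_sub_self (by omega)], rfl⟩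

theorem exists_adj_last_of_gasket_adj {x y : Quotient (gasketSetoid G t)}
    (h : (gasket G t).Adj x y) :
    ∃ (u v : Fin t → V) (i : Fin t), ⟦u⟧ = x ∧ ⟦v⟧ = y ∧ i.val + 1 = t ∧
      (∀ j, j < i → u j = v j) ∧ G.Adj (u i) (v i) := by
  obtain ⟨hne, u, v, rfl, rfl, i, hpre, hadj, hsuf⟩ := h
  refine ⟨u, v, i, rfl, rfl, ?_, hpre, hadj⟩
  by_contra hi
  exact hne (Quotient.sound (Relation.EqvGen.rel _ _ ⟨i, i, rfl, by omega, hpre, hadj, hsuf⟩))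

section WordColor

variable {m : ℕ} (c : G.Coloring (Fin (m + 1))) (ht : 1 ≤ t)

open Classical in
noncomputable def wordColor (u : Fin t → V) : Fin (m + 2) :=
  if IsDeepLinkEnd G t u then Fin.last (m + 1)
  else (c (u ⟨t - 1, by omega⟩) + if 2 ≤ t then c (u ⟨t - 2, by omega⟩) else 0).castSucc

theorem wordColor_eq_of_linking (h : linking G t u v) : wordColor c ht u = wordColor c ht v := by
  obtain ⟨p, hlink⟩ := h
  by_cases hp : p + 3 ≤ t
  · have hu : IsDeepLinkEnd G t u := ⟨p, v, hp, hlink⟩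
    have hv : IsDeepLinkEnd G t v := ⟨p, u, hp, hlink.symm⟩
    rw [wordColor, wordColor, if_pos hu, if_pos hv]
  · have hu := hlink.not_isDeepLinkEnd (by omega)
    have hv := hlink.symm.not_isDeepLinkEnd (by omega)
    obtain ⟨i, rfl, hit, -, -, hsuf⟩ := hlink
    have hi : (⟨t - 2, by omega⟩ : Fin t) = i := Fin.ext (by simp; omega)
    have hlast := hsuf ⟨t - 1, by omega⟩ (by simp [Fin.lt_def]; omega)
    simp only [wordColor, if_neg hu, if_neg hv, if_pos (by omega : 2 ≤ t), hi,
      hlast.1, hlast.2, add_comm]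

theorem wordColor_ne_of_adj {i : Fin t} (hi : i.val + 1 = t) (hpre : ∀ j, j < i → u j = v j)
    (hadj : G.Adj (u i) (v i)) : wordColor c ht u ≠ wordColor c ht v := by
  have hlast : (⟨t - 1, by omega⟩ : Fin t) = i := Fin.ext (by simp; omega)
  by_cases hu : IsDeepLinkEnd G t u <;> by_cases hv : IsDeepLinkEnd G t v
  · have ht3 : 3 ≤ t := by obtain ⟨p, -, hp, -⟩ := hu; omega
    have hpen : (⟨t - 2, by omega⟩ : Fin t) < i := by simp [Fin.lt_def]; omega
    refine absurd ?_ hadj.ne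
    calc u i = u ⟨t - 2, by omega⟩ := hu.apply_eq_apply (by omega) (by simp; omega)
      _ = v ⟨t - 2, by omega⟩ := hpre _ hpen
      _ = v i := hv.apply_eq_apply (by simp; omega) (by omega)
  · rw [wordColor, wordColor, if_pos hu, if_neg hv]
    exact (Fin.castSucc_ne_last _).symm
  · rw [wordColor, wordColor, if_neg hu, if_pos hv]
    exact Fin.castSucc_ne_last _
  · have hpen : 2 ≤ t → u ⟨t - 2, by omega⟩ = v ⟨t - 2, by omega⟩ := fun h2 =>
      hpre _ (by simp [Fin.lt_def]; omega)
    simp only [wordColor, if_neg hu, if_neg hv, ne_eq, Fin.castSucc_inj, hlast]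
    split_ifs with h2
    · rw [hpen h2, add_left_inj]; exact c.valid hadj
    · rw [add_left_inj]; exact c.valid hadj

noncomputable def gasketColoring : (gasket G t).Coloring (Fin (m + 2)) :=
  .mk (Quotient.lift (wordColor c ht) fun _ _ h =>
      Setoid.eqvGen_le (s := Setoid.ker (wordColor c ht))
        (fun _ _ hlink => wordColor_eq_of_linking c ht hlink) h)
    fun {x y} hxy => by
      obtain ⟨u, v, i, rfl, rfl, hi, hpre, hadj⟩ := exists_adj_last_of_gasket_adj hxy
      exact wordColor_ne_of_adj c ht hi hpre hadj

theorem gasketColoring_mk (u : Fin t → V) : gasketColoring c ht ⟦u⟧ = wordColor c ht u := rfl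

theorem gasketColoring_eq_last {x : Quotient (gasketSetoid G t)}
    (h : gasketColoring c ht x = Fin.last (m + 1)) :
    ∃ s, 3 ≤ s ∧ s ≤ t ∧ contractedVtxAtStep G t s x := by
  induction x using Quotient.ind with
  | _ u =>
  by_cases hu : IsDeepLinkEnd G t u
  · exact hu.exists_contractedVtxAtStep
  · rw [gasketColoring_mk, wordColor, if_neg hu] at h
    exact absurd h (Fin.castSucc_ne_last _)

end WordColor

theorem exists_gasket_coloring (ht : 1 ≤ t) {k : ℕ} (hk : G.Colorable k) :
    ∃ c : (gasket G t).Coloring (Fin (k + 1)),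
      ∀ x, c x = Fin.last k → ∃ s, 3 ≤ s ∧ s ≤ t ∧ contractedVtxAtStep G t s x := by
  cases k with
  | zero =>
    have : IsEmpty V := hk.isEmpty
    have : IsEmpty (Fin t → V) := ⟨fun u => isEmptyElim (u ⟨0, ht⟩)⟩
    exact ⟨.mk isEmptyElim fun {x} => isEmptyElim x, fun x => isEmptyElim x⟩
  | succ m => exact ⟨gasketColoring hk.some ht, fun _ => gasketColoring_eq_last hk.some ht⟩

theorem SimpleGraph.chromaticNumber_le_add_one_of_forall_colorable {W : Type*}
    {H : SimpleGraph W} (h : ∀ k, G.Colorable k → H.Colorable (k + 1)) :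
    H.chromaticNumber ≤ G.chromaticNumber + 1 := by
  cases hχ : G.chromaticNumber using ENat.recTopCoe with
  | top => simp
  | coe k =>
    have hk : G.Colorable k := G.chromaticNumber_le_iff_colorable.mp hχ.le
    exact_mod_cast (H.chromaticNumber_le_iff_colorable).mpr (h k hk)

/-- `χ(S[G,t]) ≤ χ(G) + 1`; moreover for `t ≥ 3` there is a proper
`(k+1)`-coloring of `S[G,t]` (where `G` is `k`-colorable) in which the extra color is
used only on vertices contracted at steps `s ≥ 3`. -/
theorem stmt_15 (G : SimpleGraph V) (t : ℕ) (ht : 1 ≤ t) :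
    (gasket G t).chromaticNumber ≤ G.chromaticNumber + 1 ∧
    (3 ≤ t → ∀ k : ℕ, G.Colorable k →
      ∃ c : (gasket G t).Coloring (Fin (k + 1)),
        ∀ x, c x = Fin.last k → ∃ s, 3 ≤ s ∧ s ≤ t ∧ contractedVtxAtStep G t s x) :=
  ⟨SimpleGraph.chromaticNumber_le_add_one_of_forall_colorable fun _ hk =>
      ⟨(exists_gasket_coloring ht hk).choose⟩,
    fun _ _ hk => exists_gasket_coloring ht hk⟩
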